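/- arXiv:2412.18501 — 2 statements merged into one kernel-verified Lean document; each statement's English description precedes it below -/
import Mathlib

section
/- With the setup of conjugate-paired eigendecomposition, define the graph Hilbert filter Ĥ as the diagonal matrix with entries −i if Im(λ_k) > 0, +i if Im(λ_k) < 0, and 0 if Im(λ_k) = 0. Then the graph Hilbert transform H = U Ĥ U⁻¹ maps real-valued graph signals to real-valued graph signals, i.e., for x ∈ ℝ^N, U Ĥ U⁻¹ x has all entries with zero imaginary part. -/
open Complex Matrix

/-- The graph Hilbert transform maps real-valued graph signals to real-valued signals. -/
theorem ght_real_to_real {N : ℕ} (A : Matrix (Fin N) (Fin N) ℝ)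
    (U : Matrix (Fin N) (Fin N) ℂ) (hU : IsUnit U.det)
    (lam : Fin N → ℂ)
    (hA : A.map (Complex.ofReal) = U * Matrix.diagonal lam * U⁻¹)
    (σ : Fin N → Fin N) (hσ : Function.Involutive σ)
    (hlam : ∀ k, lam (σ k) = starRingEnd ℂ (lam k))
    (hcol : ∀ k i, U i (σ k) = starRingEnd ℂ (U i k))
    (hfix : ∀ k, (lam k).im ≠ 0 → σ k ≠ k)
    (x : Fin N → ℝ) :
    ∀ k, (((U * Matrix.diagonal (fun k =>
        if 0 < (lam k).im then -Complex.I
        else if (lam k).im < 0 then Complex.I else 0) * U⁻¹).mulVec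
        (fun i => (x i : ℂ))) k).im = 0 := by
  intro k
  set f := starRingEnd ℂ with hf
  set d : Fin N → ℂ := fun k =>
    if 0 < (lam k).im then -Complex.I
    else if (lam k).im < 0 then Complex.I else 0 with hdDef
  let σe : Fin N ≃ Fin N := ⟨σ, σ, hσ, hσ⟩
  -- conjugate of d
  have him : ∀ a, (lam (σ a)).im = -(lam a).im := by
    intro a; rw [hlam a, hf, Complex.conj_im]
  have hd : ∀ a, f (d a) = d (σ a) := by
    intro a
    rcases lt_trichotomy (lam a).im 0 with h | h | h
    · simp [hdDef, hf, h, him a, not_lt.2 (le_of_lt h), neg_pos.2 h, asymm h]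
    · simp [hdDef, hf, h, him a]
    · simp [hdDef, hf, h, him a, not_lt.2 (le_of_lt h), asymm h,
        neg_lt_zero.2 h, not_lt.2 (le_of_lt (neg_lt_zero.2 h))]
  -- conjugate of U
  have hUmap : U.map f = U.submatrix id σ := by
    ext i j
    simp only [Matrix.map_apply, Matrix.submatrix_apply, id_eq]
    exact (hcol j i).symm
  have hUinv1 : U.map f * (U⁻¹).map f = 1 := by
    rw [← Matrix.map_mul, Matrix.mul_nonsing_inv U hU,
      Matrix.map_one _ (map_zero f) (map_one f)]
  have hUinv2 : U.map f * (U⁻¹).submatrix σ id = 1 := by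
    rw [hUmap]
    have : (σ : Fin N → Fin N) = ⇑σe := rfl
    rw [this, Matrix.submatrix_mul_equiv U U⁻¹ id σe id,
      Matrix.mul_nonsing_inv U hU]
    rfl
  have hInvEq : (U⁻¹).map f = (U⁻¹).submatrix σ id :=
    (Matrix.inv_eq_right_inv hUinv1).symm.trans (Matrix.inv_eq_right_inv hUinv2)
  have hinv' : ∀ a j, f (U⁻¹ a j) = U⁻¹ (σ a) j := by
    intro a j
    have := congrFun (congrFun hInvEq a) j
    simpa [Matrix.map_apply, Matrix.submatrix_apply] using this
  -- the matrix M is real entrywise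
  have expand : ∀ i j, (U * Matrix.diagonal d * U⁻¹) i j
      = ∑ a, U i a * d a * U⁻¹ a j := by
    intro i j
    rw [Matrix.mul_apply]
    refine Finset.sum_congr rfl fun a _ => ?_
    rw [Matrix.mul_diagonal]
  have hM : ∀ i j, f ((U * Matrix.diagonal d * U⁻¹) i j)
      = (U * Matrix.diagonal d * U⁻¹) i j := by
    intro i j
    rw [expand i j, map_sum]
    apply Fintype.sum_equiv σe
    intro a
    simp only [_root_.map_mul]
    rw [hd a, hinv' a j]
    congr 1
    congr 1
    exact (hcol a i).symm
  -- conclude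
  rw [← Complex.conj_eq_iff_im]
  simp only [Matrix.mulVec, dotProduct, map_sum, _root_.map_mul]
  apply Finset.sum_congr rfl
  intro j _
  rw [← hf, hM k j, Complex.conj_ofReal]
end

section
/- For a real diagonalizable matrix A with distinct eigenvalues, a real graph signal x is recovered from its analytical signal by x = Re(x̃) and H(x) = Im(x̃), where x̃ = U (I + i Ĥ) U⁻¹ x and H(x) is real-valued. -/
open Complex Matrix

/-- For a real diagonalizable matrix with distinct, conjugate-paired eigenvalues,
a real signal `x` is recovered from its analytical signal `x̃` by `x = Re x̃` and
`H(x) = Im x̃`, with `H(x)` real-valued. -/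
theorem recovery_from_analytical_signal {N : ℕ} (A : Matrix (Fin N) (Fin N) ℝ)
    (U : Matrix (Fin N) (Fin N) ℂ) (hU : IsUnit U.det)
    (lam : Fin N → ℂ) (hdistinct : Function.Injective lam)
    (hA : A.map (Complex.ofReal) = U * Matrix.diagonal lam * U⁻¹)
    (σ : Fin N → Fin N) (hσ : Function.Involutive σ)
    (hlam : ∀ k, lam (σ k) = starRingEnd ℂ (lam k))
    (hcol : ∀ k i, U i (σ k) = starRingEnd ℂ (U i k))
    (hfix : ∀ k, (lam k).im ≠ 0 → σ k ≠ k)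
    (x : Fin N → ℝ) :
    let Hd : Matrix (Fin N) (Fin N) ℂ := Matrix.diagonal (fun k =>
      if 0 < (lam k).im then -Complex.I
      else if (lam k).im < 0 then Complex.I else 0)
    let Hx : Fin N → ℂ := (U * Hd * U⁻¹).mulVec (fun i => (x i : ℂ))
    let xt : Fin N → ℂ := (U * (1 + Complex.I • Hd) * U⁻¹).mulVec (fun i => (x i : ℂ))
    ∀ k, (xt k).re = x k ∧ (xt k).im = (Hx k).re ∧ (Hx k).im = 0 := by
  intro Hd Hx xt k
  classical
  set h : Fin N → ℂ := (fun k =>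
      if 0 < (lam k).im then -Complex.I
      else if (lam k).im < 0 then Complex.I else 0) with hh
  have hHd : Hd = Matrix.diagonal h := rfl
  set xc : Fin N → ℂ := fun i => (x i : ℂ) with hxc
  have hUinv : U * U⁻¹ = 1 := Matrix.mul_nonsing_inv U hU
  -- permutation matrix of σ
  set E : Matrix (Fin N) (Fin N) ℂ :=
    Matrix.of (fun j l => if j = σ l then (1 : ℂ) else 0) with hEdef
  have hEE : E * E = 1 := by
    ext j l
    simp only [Matrix.mul_apply, hEdef, Matrix.of_apply, Matrix.one_apply]
    rw [Finset.sum_eq_single (σ l)]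
    · simp [hσ l]
    · intro b _ hb; simp [hb]
    · intro habs; exact absurd (Finset.mem_univ _) habs
  have hconjU : U.map (starRingEnd ℂ) = U * E := by
    ext i l
    simp only [Matrix.map_apply, Matrix.mul_apply, hEdef, Matrix.of_apply]
    rw [Finset.sum_eq_single (σ l)]
    · simp [hcol l i]
    · intro b _ hb; simp [hb]
    · intro habs; exact absurd (Finset.mem_univ _) habs
  -- conjugate of the filter values
  have hhσ : ∀ j, h (σ j) = starRingEnd ℂ (h j) := by
    intro j
    have him : (lam (σ j)).im = -(lam j).im := by
      rw [hlam j]; simp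
    simp only [hh, him]
    rcases lt_trichotomy ((lam j).im) 0 with hlt | heq | hgt
    · rw [if_pos (by linarith), if_neg (by linarith), if_pos hlt, Complex.conj_I]
    · rw [heq]; simp
    · rw [if_neg (by linarith), if_pos (by linarith), if_pos hgt]
      simp
  have hswap : E * Hd.map (starRingEnd ℂ) = Hd * E := by
    rw [hHd, Matrix.diagonal_map (map_zero _)]
    ext j l
    rw [Matrix.mul_diagonal, Matrix.diagonal_mul]
    simp only [hEdef, Matrix.of_apply, Function.comp]
    by_cases hj : j = σ l
    · subst hj
      simp [← hhσ l]
    · simp [hj]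
  have hconjUinv : U⁻¹.map (starRingEnd ℂ) = E * U⁻¹ := by
    have h1 : (U.map (starRingEnd ℂ)) * (U⁻¹.map (starRingEnd ℂ)) = 1 := by
      rw [← Matrix.map_mul, hUinv]
      simp
    have h2 : (U * E) * (E * U⁻¹) = 1 := by
      calc (U * E) * (E * U⁻¹) = U * (E * E) * U⁻¹ := by
            simp only [mul_assoc]
        _ = 1 := by rw [hEE, mul_one, hUinv]
    have e1 : (U.map (starRingEnd ℂ))⁻¹ = U⁻¹.map (starRingEnd ℂ) :=
      Matrix.inv_eq_right_inv h1
    have e2 : (U * E)⁻¹ = E * U⁻¹ := Matrix.inv_eq_right_inv h2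
    rw [← e1, hconjU, e2]
  have hM : (U * Hd * U⁻¹).map (starRingEnd ℂ) = U * Hd * U⁻¹ := by
    calc (U * Hd * U⁻¹).map (starRingEnd ℂ)
        = (U * E) * Hd.map (starRingEnd ℂ) * (E * U⁻¹) := by
          rw [Matrix.map_mul, Matrix.map_mul, hconjU, hconjUinv]
      _ = U * ((E * Hd.map (starRingEnd ℂ)) * (E * U⁻¹)) := by simp only [mul_assoc]
      _ = U * ((Hd * E) * (E * U⁻¹)) := by rw [hswap]
      _ = U * (Hd * ((E * E) * U⁻¹)) := by simp only [mul_assoc]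
      _ = U * Hd * U⁻¹ := by rw [hEE, one_mul, mul_assoc]
  -- H(x) is real
  have hreal : ∀ j, starRingEnd ℂ (Hx j) = Hx j := by
    intro j
    have step : starRingEnd ℂ (Hx j) = ((U * Hd * U⁻¹).map (starRingEnd ℂ)).mulVec xc j := by
      simp [Hx, Matrix.mulVec, dotProduct, map_sum, _root_.map_mul,
        Matrix.map_apply, Complex.conj_ofReal, hxc]
    rw [step, hM]
  have him0 : (Hx k).im = 0 := by
    have := hreal k
    rw [Complex.conj_eq_iff_im] at this
    exact this
  -- decomposition of xt
  have hxt : xt k = xc k + Complex.I * Hx k := by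
    have hexp : U * (1 + Complex.I • Hd) * U⁻¹ = 1 + Complex.I • (U * Hd * U⁻¹) := by
      rw [mul_add, add_mul, mul_one, hUinv, Matrix.mul_smul, Matrix.smul_mul]
    simp [xt, Hx, hexp, Matrix.add_mulVec, Matrix.smul_mulVec,
      Matrix.one_mulVec, hxc, Pi.smul_apply, smul_eq_mul]
  refine ⟨?_, ?_, him0⟩
  · simp [hxt, hxc, Complex.add_re, Complex.mul_re, Complex.I_re, Complex.I_im,
      Complex.ofReal_re, him0]
  · simp [hxt, hxc, Complex.add_im, Complex.mul_im, Complex.I_re, Complex.I_im,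
      Complex.ofReal_im]
end
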